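/- Let (B, +, ∘) be a left semi-brace with λ_a(b) := a ∘ (a⁻ + b), ρ_b(a) := (a⁻ + b)⁻ ∘ b, and r_B(a,b) := (λ_a(b), ρ_b(a)). Then r_B is a set-theoretical solution of the Yang–Baxter equation, i.e., (r_B × id)(id × r_B)(r_B × id) = (id × r_B)(r_B × id)(id × r_B), if and only if a + λ_b(c) ∘ (0 + ρ_c(b)) = a + b ∘ (0 + c) for all a, b, c ∈ B. -/

import Mathlib

/-- A left semi-brace: a semigroup operation `add` together with a group
structure `∘` (the multiplication of the `Group` instance) satisfying
`a ∘ (b + c) = a ∘ b + a ∘ (a⁻¹ + c)`. -/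
structure IsLeftSemiBrace (B : Type*) [Group B] (add : B → B → B) : Prop where
  add_assoc : ∀ a b c : B, add (add a b) c = add a (add b c)
  semibrace : ∀ a b c : B, a * add b c = add (a * b) (a * add a⁻¹ c)

/-- The map `r` acting on the first and second components of a triple. -/
def R12 {X : Type*} (r : X × X → X × X) : X × X × X → X × X × X :=
  fun p => ((r (p.1, p.2.1)).1, (r (p.1, p.2.1)).2, p.2.2)

/-- The map `r` acting on the second and third components of a triple. -/
def R23 {X : Type*} (r : X × X → X × X) : X × X × X → X × X × X :=
  fun p => (p.1, (r (p.2.1, p.2.2)).1, (r (p.2.1, p.2.2)).2)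

/-- `r` is a set-theoretical solution of the Yang-Baxter equation. -/
def IsYBE {X : Type*} (r : X × X → X × X) : Prop :=
  R12 r ∘ R23 r ∘ R12 r = R23 r ∘ R12 r ∘ R23 r

/-!
The map `r(a, b) = (λ_a b, ρ_b a)` preserves the group product, `λ_a b ∘ ρ_b a = a ∘ b`, and so do
both sides of the braid relation; hence two triples agree as soon as their outer components do.
The first components always agree because `λ` is a homomorphism from `(B, ∘)` to the maps `B → B`.
For the third components, the semi-brace law turns `ρ_c (ρ_b a)` into
`(a⁻ + b ∘ (0 + c))⁻ ∘ b ∘ c`; the same identity at `(a, λ_b c, ρ_c b)` rewrites the other side as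
`(a⁻ + λ_b c ∘ (0 + ρ_c b))⁻ ∘ b ∘ c`, so they agree iff the condition holds at `a⁻`.
-/

section YangBaxter

variable {G : Type*} [Group G]

def tripleProd (p : G × G × G) : G := p.1 * p.2.1 * p.2.2

lemma eq_of_tripleProd_eq {p q : G × G × G} (h : tripleProd p = tripleProd q)
    (h₁ : p.1 = q.1) (h₃ : p.2.2 = q.2.2) : p = q := by
  obtain ⟨a, b, c⟩ := p
  obtain ⟨a', b', c'⟩ := q
  simp only [tripleProd] at h h₁ h₃
  subst h₁ h₃
  simpa using h

variable {r : G × G → G × G}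

lemma tripleProd_R12 (hr : ∀ x y, (r (x, y)).1 * (r (x, y)).2 = x * y) (p : G × G × G) :
    tripleProd (R12 r p) = tripleProd p := by
  simp only [tripleProd, R12, hr]

lemma tripleProd_R23 (hr : ∀ x y, (r (x, y)).1 * (r (x, y)).2 = x * y) (p : G × G × G) :
    tripleProd (R23 r p) = tripleProd p := by
  simp only [tripleProd, R23, mul_assoc, hr]

theorem isYBE_iff_of_mul (hr : ∀ x y, (r (x, y)).1 * (r (x, y)).2 = x * y) :
    IsYBE r ↔ ∀ p, ((R12 r ∘ R23 r ∘ R12 r) p).1 = ((R23 r ∘ R12 r ∘ R23 r) p).1 ∧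
      ((R12 r ∘ R23 r ∘ R12 r) p).2.2 = ((R23 r ∘ R12 r ∘ R23 r) p).2.2 := by
  refine ⟨fun h p => by rw [h]; exact ⟨rfl, rfl⟩, fun h => funext fun p => ?_⟩
  refine eq_of_tripleProd_eq ?_ (h p).1 (h p).2
  simp only [Function.comp_apply, tripleProd_R12 hr, tripleProd_R23 hr]

end YangBaxter

namespace IsLeftSemiBrace

variable {B : Type*} [Group B] (add : B → B → B)

def lam (a b : B) : B := a * add a⁻¹ b

def rho (b a : B) : B := (add a⁻¹ b)⁻¹ * b

def solution (p : B × B) : B × B := (lam add p.1 p.2, rho add p.2 p.1)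

lemma lam_mul_rho (a b : B) : lam add a b * rho add b a = a * b := by
  simp [lam, rho, mul_assoc]

variable {add}

lemma lam_mul (h : IsLeftSemiBrace B add) (a b c : B) :
    lam add (a * b) c = lam add a (lam add b c) := by
  have hb : b * (b⁻¹ * a⁻¹) = a⁻¹ := by group
  rw [lam, lam, lam, mul_inv_rev, mul_assoc, h.semibrace, hb]

lemma add_lam (h : IsLeftSemiBrace B add) (a c : B) : add a (lam add a c) = a * add 1 c := by
  simpa [lam] using (h.semibrace a 1 c).symm

lemma inv_mul_add (h : IsLeftSemiBrace B add) (a x c : B) :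
    add (a⁻¹ * x) c = a⁻¹ * add x (lam add a c) := by
  rw [eq_inv_mul_iff_mul_eq, h.semibrace, mul_inv_cancel_left, lam]

lemma rho_rho (h : IsLeftSemiBrace B add) (a b c : B) :
    rho add c (rho add b a) = (add a⁻¹ (b * add 1 c))⁻¹ * (b * c) := by
  have hinv : (rho add b a)⁻¹ = b⁻¹ * add a⁻¹ b := by simp [rho]
  rw [rho, hinv, h.inv_mul_add, h.add_assoc, h.add_lam]
  group

end IsLeftSemiBrace

open IsLeftSemiBrace

theorem stmt13 {B : Type*} [Group B] (add : B → B → B)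
    (h : IsLeftSemiBrace B add) :
    letI lam : B → B → B := fun x y => x * add x⁻¹ y
    letI rho : B → B → B := fun y x => (add x⁻¹ y)⁻¹ * y
    IsYBE (fun p : B × B => (lam p.1 p.2, rho p.2 p.1)) ↔
      ∀ a b c : B, add a (lam b c * add 1 (rho c b)) = add a (b * add 1 c) := by
  show IsYBE (solution add) ↔
    ∀ a b c, add a (lam add b c * add 1 (rho add c b)) = add a (b * add 1 c)
  rw [isYBE_iff_of_mul (lam_mul_rho add)]
  simp only [Prod.forall, Function.comp_apply, R12, R23, solution, ← h.lam_mul, lam_mul_rho,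
    h.rho_rho, true_and, mul_left_inj, inv_inj]
  refine ⟨fun H a b c => ?_, fun H a b c => (H a⁻¹ b c).symm⟩
  simpa only [inv_inv] using (H a⁻¹ b c).symm
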